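/- Let α ∈ (0,1). For every ρ ≥ 0 and w ∈ ℝ^d with H(ρ,w) < ∞ (H(ρ,w) = |w|²/ρ^α for ρ > 0, H(0,0) = 0), and for every (a,b) ∈ ∂H(ρ,w), Fenchel equality holds: H(ρ,w) + L(a,b) = aρ + ⟨b,w⟩, where L is the conjugate of H. Conversely, if H(ρ,w) + L(a,b) = aρ + ⟨b,w⟩ with both sides finite, then (a,b) ∈ ∂H(ρ,w); in particular then w = (1/2)ρ^α b, and if ρ > 0 then a = −(α/4) ρ^{α−1}|b|². -/

import Mathlib

open scoped RealInnerProductSpace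
open Classical

/-- `H(ρ,w) = |w|²/ρ^α` if `ρ > 0`, `H(0,0) = 0`, `+∞` otherwise. -/
noncomputable def Hfun (d : ℕ) (α : ℝ) (p : ℝ × EuclideanSpace ℝ (Fin d)) : EReal :=
  if 0 < p.1 then ((‖p.2‖ ^ 2 / p.1 ^ α : ℝ) : EReal)
  else if p.1 = 0 ∧ p.2 = 0 then 0 else ⊤

/-- `L(a,b) = κ_α (|b|^{2/α}/(-a))^{α/(1-α)}` if `a < 0`, `L(0,0) = 0`, `+∞` otherwise. -/
noncomputable def Lfun (d : ℕ) (α : ℝ) (q : ℝ × EuclideanSpace ℝ (Fin d)) : EReal :=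
  if q.1 < 0 then
    ((((1 - α) * α ^ (α / (1 - α)) / 4 ^ ((1 : ℝ) / (1 - α))) *
      (‖q.2‖ ^ ((2 : ℝ) / α) / (-q.1)) ^ (α / (1 - α)) : ℝ) : EReal)
  else if q.1 = 0 ∧ q.2 = 0 then 0 else ⊤

/-- The convex subdifferential of `H` at `p`. -/
def subdiffH (d : ℕ) (α : ℝ) (p : ℝ × EuclideanSpace ℝ (Fin d)) :
    Set (ℝ × EuclideanSpace ℝ (Fin d)) :=
  {q | ∀ p' : ℝ × EuclideanSpace ℝ (Fin d),
    Hfun d α p + ((q.1 * (p'.1 - p.1) + ⟪q.2, p'.2 - p.2⟫ : ℝ) : EReal) ≤ Hfun d α p'}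

/-! Maximising over `w` first, `sup_w (⟪b, w⟫ - ‖w‖² / ρ^α) = ‖b‖² ρ^α / 4`, attained at
`w = ρ^α b / 2`; hence `L(a, b) = sup_{t ≥ 0} (a t + ‖b‖²/4 · t^α)`. This supremum is `+∞` unless
`a < 0` or `a = b = 0`, and for `a < 0` the concave function `t ↦ a t + ‖b‖²/4 · t^α` is maximal at
its critical point, where it equals `κ_α (‖b‖^{2/α} / (-a))^{α/(1-α)}`. This yields Young's
inequality `aρ + ⟪b, w⟫ ≤ H(ρ, w) + L(a, b)`. Testing the subgradient inequality at the points
`(t, t^α b / 2)` gives the reverse inequality. Conversely, equality in Young's inequality forces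
equality in both partial maximisations: `w = ρ^α b / 2`, and by Fermat's rule
`a + α ‖b‖²/4 · ρ^{α-1} = 0`. -/

open Real Set Filter

theorem rpow_le_tangent {α s t : ℝ} (hα0 : 0 ≤ α) (hα1 : α ≤ 1) (hs : 0 < s) (ht : 0 ≤ t) :
    t ^ α ≤ s ^ α + α * s ^ (α - 1) * (t - s) := by
  have hbern := rpow_one_add_le_one_add_mul_self (s := t / s - 1)
    (by linarith [div_nonneg ht hs.le]) hα0 hα1
  rw [add_sub_cancel, div_rpow ht hs.le, div_le_iff₀ (rpow_pos_of_pos hs α)] at hbern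
  rw [rpow_sub_one hs.ne']
  calc t ^ α ≤ (1 + α * (t / s - 1)) * s ^ α := hbern
    _ = s ^ α + α * (s ^ α / s) * (t - s) := by field_simp

section OneDim

variable {α a c s : ℝ}

theorem mul_add_mul_rpow_le_of_deriv_eq_zero (hα0 : 0 ≤ α) (hα1 : α ≤ 1) (hc : 0 ≤ c)
    (hs : 0 < s) (hcrit : a + c * (α * s ^ (α - 1)) = 0) {t : ℝ} (ht : 0 ≤ t) :
    a * t + c * t ^ α ≤ a * s + c * s ^ α := by
  nlinarith [mul_le_mul_of_nonneg_left (rpow_le_tangent hα0 hα1 hs ht) hc]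

theorem deriv_eq_zero_of_isLocalMax (hs : 0 < s)
    (hmax : IsLocalMax (fun t => a * t + c * t ^ α) s) :
    a + c * (α * s ^ (α - 1)) = 0 := by
  have hderiv : HasDerivAt (fun t => a * t + c * t ^ α) (a * 1 + c * (α * s ^ (α - 1))) s :=
    ((hasDerivAt_id s).const_mul a).add ((hasDerivAt_rpow_const (Or.inl hs.ne')).const_mul c)
  simpa using hmax.hasDerivAt_eq_zero hderiv

theorem tendsto_mul_add_mul_rpow_atTop (hα : 0 < α) (ha : 0 ≤ a) (hc : 0 ≤ c)
    (hac : 0 < a ∨ 0 < c) : Tendsto (fun t => a * t + c * t ^ α) atTop atTop := by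
  rcases hac with ha' | hc'
  · refine tendsto_atTop_mono' atTop ?_ (tendsto_id.const_mul_atTop ha')
    filter_upwards [eventually_ge_atTop 0] with t ht
    have : 0 ≤ c * t ^ α := by positivity
    simp only [id]
    linarith
  · refine tendsto_atTop_mono' atTop ?_ ((tendsto_rpow_atTop hα).const_mul_atTop hc')
    filter_upwards [eventually_ge_atTop 0] with t ht
    have : 0 ≤ a * t := by positivity
    linarith

noncomputable def kappa (α : ℝ) : ℝ := (1 - α) * α ^ (α / (1 - α)) / 4 ^ ((1 : ℝ) / (1 - α))

theorem exists_deriv_eq_zero_and_eq_kappa (hα0 : 0 < α) (hα1 : α < 1) (ha : a < 0) {x : ℝ}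
    (hx : 0 < x) : ∃ s > 0, a + x ^ 2 / 4 * (α * s ^ (α - 1)) = 0 ∧
      a * s + x ^ 2 / 4 * s ^ α = kappa α * (x ^ (2 / α) / (-a)) ^ (α / (1 - α)) := by
  have h1α : 1 - α ≠ 0 := by linarith
  have hna : 0 < -a := by linarith
  have hu : 0 < α * (x ^ 2 / 4) / (-a) := by positivity
  set s := (α * (x ^ 2 / 4) / (-a)) ^ (1 / (1 - α)) with hs
  have hspos : 0 < s := by positivity
  have hs1 : s ^ (α - 1) = (α * (x ^ 2 / 4) / (-a))⁻¹ := by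
    rw [hs, ← rpow_mul hu.le, ← rpow_neg_one]
    congr 1
    field_simp
    ring
  have hcrit : a + x ^ 2 / 4 * (α * s ^ (α - 1)) = 0 := by
    rw [hs1]
    field_simp
    ring
  have hsα : s ^ α = s ^ (α - 1) * s := by rw [rpow_sub_one hspos.ne']; field_simp
  have hpow_succ : ∀ y : ℝ, 0 < y → y ^ (1 / (1 - α)) = y ^ (α / (1 - α)) * y := fun y hy => by
    rw [← rpow_add_one hy.ne']
    congr 1
    field_simp
    ring
  have hx2 : (x ^ (2 / α)) ^ (α / (1 - α)) = (x ^ 2) ^ (1 / (1 - α)) := by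
    rw [← rpow_mul hx.le, ← rpow_natCast, ← rpow_mul hx.le]
    congr 1
    field_simp
    push_cast
    ring
  refine ⟨s, hspos, hcrit, ?_⟩
  rw [hsα, hs1, hs, kappa, div_rpow (x := x ^ (2 / α)) (by positivity) hna.le, hx2,
    div_rpow (by positivity) hna.le,
    mul_rpow hα0.le (by positivity), div_rpow (by positivity) (by norm_num),
    hpow_succ α hα0, hpow_succ (-a) hna]
  have : 0 < α ^ (α / (1 - α)) := by positivity
  have : 0 < (4 : ℝ) ^ (1 / (1 - α)) := by positivity
  have : 0 < (-a) ^ (α / (1 - α)) := by positivity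
  have : a ≠ 0 := ha.ne
  field_simp
  ring

theorem isGreatest_mul_add_sq_div_four_mul_rpow (hα0 : 0 < α) (hα1 : α < 1) (ha : a < 0) {x : ℝ}
    (hx : 0 ≤ x) : IsGreatest ((fun t => a * t + x ^ 2 / 4 * t ^ α) '' Ici 0)
      (kappa α * (x ^ (2 / α) / (-a)) ^ (α / (1 - α))) := by
  rcases hx.eq_or_lt with rfl | hx
  · have h1α : 0 < 1 - α := by linarith
    rw [zero_rpow (by positivity), zero_div, zero_rpow (by positivity), mul_zero]
    refine ⟨⟨0, self_mem_Ici, by simp⟩, ?_⟩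
    rintro _ ⟨t, ht, rfl⟩
    simpa using mul_nonpos_of_nonpos_of_nonneg ha.le ht
  · obtain ⟨s, hs, hcrit, hval⟩ := exists_deriv_eq_zero_and_eq_kappa hα0 hα1 ha hx
    rw [← hval]
    refine ⟨⟨s, hs.le, rfl⟩, ?_⟩
    rintro _ ⟨t, ht, rfl⟩
    exact mul_add_mul_rpow_le_of_deriv_eq_zero hα0.le hα1.le (by positivity) hs hcrit ht

end OneDim

theorem EReal.isLUB_image_coe_top {f : ℝ → ℝ} (hf : Tendsto f atTop atTop) (s : ℝ) :
    IsLUB ((fun t => (f t : EReal)) '' Ici s) ⊤ := by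
  refine ⟨fun _ _ => le_top, fun u hu => ?_⟩
  rw [top_le_iff, EReal.eq_top_iff_forall_lt]
  intro m
  obtain ⟨t, hm, ht⟩ := ((hf.eventually_gt_atTop m).and (eventually_ge_atTop s)).exists
  exact (EReal.coe_lt_coe_iff.2 hm).trans_le (hu ⟨t, ht, rfl⟩)

section HL

variable {d : ℕ} {α ρ a : ℝ} {w b : EuclideanSpace ℝ (Fin d)}

theorem Lfun_of_neg (ha : a < 0) :
    Lfun d α (a, b) = ((kappa α * (‖b‖ ^ (2 / α) / (-a)) ^ (α / (1 - α)) : ℝ) : EReal) := by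
  rw [Lfun, if_pos ha]
  rfl

theorem isLUB_Lfun (hα0 : 0 < α) (hα1 : α < 1) (a : ℝ) (b : EuclideanSpace ℝ (Fin d)) :
    IsLUB ((fun t : ℝ => ((a * t + ‖b‖ ^ 2 / 4 * t ^ α : ℝ) : EReal)) '' Ici 0)
      (Lfun d α (a, b)) := by
  rcases lt_trichotomy a 0 with ha | rfl | ha
  · rw [Lfun_of_neg ha, ← image_image (g := ((↑) : ℝ → EReal))]
    exact (EReal.coe_strictMono.monotone.map_isGreatest
      (isGreatest_mul_add_sq_div_four_mul_rpow hα0 hα1 ha (norm_nonneg b))).isLUB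
  · by_cases hb : b = 0
    · subst hb
      have hL : Lfun d α (0, 0) = 0 := by simp [Lfun]
      rw [hL]
      refine IsGreatest.isLUB ⟨⟨0, self_mem_Ici, by simp⟩, ?_⟩
      rintro _ ⟨t, -, rfl⟩
      simp
    · have hL : Lfun d α (0, b) = ⊤ := by simp [Lfun, hb]
      rw [hL]
      exact EReal.isLUB_image_coe_top (tendsto_mul_add_mul_rpow_atTop hα0 le_rfl
        (by positivity) (Or.inr (by positivity))) 0
  · have hL : Lfun d α (a, b) = ⊤ := by simp [Lfun, not_lt.2 ha.le, ha.ne']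
    rw [hL]
    exact EReal.isLUB_image_coe_top (tendsto_mul_add_mul_rpow_atTop hα0 ha.le
      (by positivity) (Or.inl ha)) 0

theorem Lfun_ne_bot (hα0 : 0 < α) (hα1 : α < 1) (a : ℝ) (b : EuclideanSpace ℝ (Fin d)) :
    Lfun d α (a, b) ≠ ⊥ :=
  ne_bot_of_le_ne_bot EReal.zero_ne_bot <|
    (isLUB_Lfun hα0 hα1 a b).1 ⟨0, self_mem_Ici, by simp [zero_rpow hα0.ne']⟩

theorem exists_Lfun_eq_coe (hα0 : 0 < α) (hα1 : α < 1) (hL : Lfun d α (a, b) ≠ ⊤) :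
    ∃ ℓ : ℝ, Lfun d α (a, b) = ℓ :=
  ⟨_, (EReal.coe_toReal hL (Lfun_ne_bot hα0 hα1 a b)).symm⟩

theorem Hfun_ne_top_iff : Hfun d α (ρ, w) ≠ ⊤ ↔ 0 < ρ ∨ (ρ = 0 ∧ w = 0) := by
  unfold Hfun
  split_ifs <;> simp_all

theorem nonneg_of_Hfun_ne_top (h : Hfun d α (ρ, w) ≠ ⊤) : 0 ≤ ρ :=
  (Hfun_ne_top_iff.1 h).elim le_of_lt fun h => h.1.ge

-- At `ρ = 0` (so `w = 0`) the right-hand side is the junk value `0 / 0 ^ α = 0`.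
theorem Hfun_of_ne_top (h : Hfun d α (ρ, w) ≠ ⊤) :
    Hfun d α (ρ, w) = ((‖w‖ ^ 2 / ρ ^ α : ℝ) : EReal) := by
  rcases Hfun_ne_top_iff.1 h with hρ | ⟨rfl, rfl⟩ <;> simp [Hfun, *]

theorem Hfun_smul_rpow (hα : 0 < α) {t : ℝ} (ht : 0 ≤ t) (b : EuclideanSpace ℝ (Fin d)) :
    Hfun d α (t, ((1 : ℝ) / 2 * t ^ α) • b) = ((‖b‖ ^ 2 / 4 * t ^ α : ℝ) : EReal) := by
  rcases ht.eq_or_lt with rfl | ht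
  · simp [Hfun, zero_rpow hα.ne']
  · have htα := rpow_pos_of_pos ht α
    rw [Hfun, if_pos ht, EReal.coe_eq_coe_iff, norm_smul, Real.norm_eq_abs, mul_pow, sq_abs]
    field_simp
    ring

theorem sq_div_add_sub_inner_eq {E : Type*} [NormedAddCommGroup E] [InnerProductSpace ℝ E]
    (b v : E) {s : ℝ} (hs : s ≠ 0) :
    ‖v‖ ^ 2 / s + ‖b‖ ^ 2 / 4 * s - ⟪b, v⟫ = ‖v - ((1 : ℝ) / 2 * s) • b‖ ^ 2 / s := by
  rw [norm_sub_sq_real, norm_smul, real_inner_smul_right, real_inner_comm, Real.norm_eq_abs,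
    mul_pow, sq_abs]
  field_simp
  ring

theorem inner_le_of_Hfun_ne_top (h : Hfun d α (ρ, w) ≠ ⊤) (b : EuclideanSpace ℝ (Fin d)) :
    ⟪b, w⟫ ≤ ‖w‖ ^ 2 / ρ ^ α + ‖b‖ ^ 2 / 4 * ρ ^ α := by
  rcases Hfun_ne_top_iff.1 h with hρ | ⟨rfl, rfl⟩
  · have hs := rpow_pos_of_pos hρ α
    have hid := sq_div_add_sub_inner_eq b w hs.ne'
    have : 0 ≤ ‖w - ((1 : ℝ) / 2 * ρ ^ α) • b‖ ^ 2 / ρ ^ α := by positivity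
    linarith
  · simp only [inner_zero_right, norm_zero]
    positivity

theorem eq_smul_of_Hfun_ne_top (hα : α ≠ 0) (h : Hfun d α (ρ, w) ≠ ⊤)
    (heq : ⟪b, w⟫ = ‖w‖ ^ 2 / ρ ^ α + ‖b‖ ^ 2 / 4 * ρ ^ α) : w = ((1 : ℝ) / 2 * ρ ^ α) • b := by
  rcases Hfun_ne_top_iff.1 h with hρ | ⟨rfl, rfl⟩
  · have hs := rpow_pos_of_pos hρ α
    have hid := sq_div_add_sub_inner_eq b w hs.ne'
    rw [heq, sub_self, eq_comm, div_eq_zero_iff, or_iff_left hs.ne', sq_eq_zero_iff,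
      norm_eq_zero, sub_eq_zero] at hid
    exact hid
  · simp [zero_rpow hα]

theorem coe_le_Hfun_add_Lfun (hα0 : 0 < α) (hα1 : α < 1) (ρ : ℝ) (w : EuclideanSpace ℝ (Fin d))
    (a : ℝ) (b : EuclideanSpace ℝ (Fin d)) :
    ((a * ρ + ⟪b, w⟫ : ℝ) : EReal) ≤ Hfun d α (ρ, w) + Lfun d α (a, b) := by
  by_cases hH : Hfun d α (ρ, w) = ⊤
  · rw [hH, EReal.top_add_of_ne_bot (Lfun_ne_bot hα0 hα1 a b)]
    exact le_top
  · have hρ := nonneg_of_Hfun_ne_top hH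
    have hinner := inner_le_of_Hfun_ne_top hH b
    rw [Hfun_of_ne_top hH]
    calc ((a * ρ + ⟪b, w⟫ : ℝ) : EReal)
        ≤ ((‖w‖ ^ 2 / ρ ^ α : ℝ) : EReal) + ((a * ρ + ‖b‖ ^ 2 / 4 * ρ ^ α : ℝ) : EReal) := by
          rw [← EReal.coe_add, EReal.coe_le_coe_iff]
          linarith
      _ ≤ _ := add_le_add le_rfl ((isLUB_Lfun hα0 hα1 a b).1 ⟨ρ, hρ, rfl⟩)

theorem Lfun_le_of_mem_subdiffH (hα0 : 0 < α) (hα1 : α < 1) (hH : Hfun d α (ρ, w) ≠ ⊤)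
    (hsub : (a, b) ∈ subdiffH d α (ρ, w)) :
    Lfun d α (a, b) ≤ ((a * ρ + ⟪b, w⟫ - ‖w‖ ^ 2 / ρ ^ α : ℝ) : EReal) := by
  refine (isLUB_Lfun hα0 hα1 a b).2 ?_
  rintro _ ⟨t, ht, rfl⟩
  -- `(t^α / 2) • b` maximises `⟪b, v⟫ - ‖v‖² / t^α` over `v`.
  have h := hsub (t, ((1 : ℝ) / 2 * t ^ α) • b)
  dsimp only at h
  rw [Hfun_of_ne_top hH, Hfun_smul_rpow hα0 ht, ← EReal.coe_add, EReal.coe_le_coe_iff,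
    inner_sub_right, real_inner_smul_right, real_inner_self_eq_norm_sq] at h
  rw [EReal.coe_le_coe_iff]
  linarith

theorem mem_subdiffH_of_Hfun_add_Lfun_eq (hα0 : 0 < α) (hα1 : α < 1) (hH : Hfun d α (ρ, w) ≠ ⊤)
    (hL : Lfun d α (a, b) ≠ ⊤)
    (heq : Hfun d α (ρ, w) + Lfun d α (a, b) = ((a * ρ + ⟪b, w⟫ : ℝ) : EReal)) :
    (a, b) ∈ subdiffH d α (ρ, w) := by
  rintro ⟨ρ', w'⟩
  dsimp only
  by_cases hH' : Hfun d α (ρ', w') = ⊤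
  · rw [hH']
    exact le_top
  obtain ⟨ℓ, hℓ⟩ := exists_Lfun_eq_coe hα0 hα1 hL
  have hY := coe_le_Hfun_add_Lfun hα0 hα1 ρ' w' a b
  rw [Hfun_of_ne_top hH, hℓ, ← EReal.coe_add, EReal.coe_eq_coe_iff] at heq
  rw [Hfun_of_ne_top hH', hℓ, ← EReal.coe_add, EReal.coe_le_coe_iff] at hY
  rw [Hfun_of_ne_top hH, Hfun_of_ne_top hH', ← EReal.coe_add, EReal.coe_le_coe_iff,
    inner_sub_right]
  linarith

end HL

theorem fenchel_equality_general (d : ℕ) (α : ℝ) (hα0 : 0 < α) (hα1 : α < 1)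
    (ρ : ℝ) (w : EuclideanSpace ℝ (Fin d)) (hH : Hfun d α (ρ, w) ≠ ⊤)
    (a : ℝ) (b : EuclideanSpace ℝ (Fin d)) :
    ((a, b) ∈ subdiffH d α (ρ, w) →
      Hfun d α (ρ, w) + Lfun d α (a, b) = ((a * ρ + ⟪b, w⟫ : ℝ) : EReal)) ∧
    (Lfun d α (a, b) ≠ ⊤ →
      Hfun d α (ρ, w) + Lfun d α (a, b) = ((a * ρ + ⟪b, w⟫ : ℝ) : EReal) →
      (a, b) ∈ subdiffH d α (ρ, w) ∧
        w = ((1 : ℝ) / 2 * ρ ^ α) • b ∧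
        (0 < ρ → a = -(α / 4) * ρ ^ (α - 1) * ‖b‖ ^ 2)) := by
  refine ⟨fun hsub => ?_, fun hL heq => ⟨mem_subdiffH_of_Hfun_add_Lfun_eq hα0 hα1 hH hL heq, ?_⟩⟩
  · have hY := coe_le_Hfun_add_Lfun hα0 hα1 ρ w a b
    have hle := Lfun_le_of_mem_subdiffH hα0 hα1 hH hsub
    obtain ⟨ℓ, hℓ⟩ := exists_Lfun_eq_coe hα0 hα1 (ne_top_of_le_ne_top (EReal.coe_ne_top _) hle)
    rw [Hfun_of_ne_top hH, hℓ, ← EReal.coe_add] at hY ⊢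
    rw [hℓ, EReal.coe_le_coe_iff] at hle
    rw [EReal.coe_le_coe_iff] at hY
    rw [EReal.coe_eq_coe_iff]
    linarith
  · obtain ⟨ℓ, hℓ⟩ := exists_Lfun_eq_coe hα0 hα1 hL
    rw [Hfun_of_ne_top hH, hℓ, ← EReal.coe_add, EReal.coe_eq_coe_iff] at heq
    have hmax : ∀ t ≥ 0, a * t + ‖b‖ ^ 2 / 4 * t ^ α ≤ ℓ := fun t ht =>
      EReal.coe_le_coe_iff.1 (hℓ ▸ (isLUB_Lfun hα0 hα1 a b).1 ⟨t, ht, rfl⟩)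
    have hinner := inner_le_of_Hfun_ne_top hH b
    have hρmax := hmax ρ (nonneg_of_Hfun_ne_top hH)
    refine ⟨eq_smul_of_Hfun_ne_top hα0.ne' hH (by linarith), fun hρpos => ?_⟩
    have hcrit := deriv_eq_zero_of_isLocalMax (a := a) (c := ‖b‖ ^ 2 / 4) (α := α) hρpos <|
      eventually_of_mem (Ioi_mem_nhds hρpos) fun t ht => by
        dsimp only
        linarith [hmax t (le_of_lt ht)]
    linear_combination hcrit

/-- Fenchel (Young) equality. If `ρ ≥ 0`, `H(ρ,w) < ∞` and
`(a,b) ∈ ∂H(ρ,w)`, then `H(ρ,w) + L(a,b) = aρ + ⟨b,w⟩`. Conversely, if the equality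
holds with both sides finite, then `(a,b) ∈ ∂H(ρ,w)`; in particular `w = (1/2)ρ^α b`
and, if `ρ > 0`, `a = −(α/4) ρ^{α−1} |b|²`. -/
theorem fenchel_equality (d : ℕ) (hd : 1 ≤ d) (α : ℝ) (hα0 : 0 < α) (hα1 : α < 1)
    (ρ : ℝ) (w : EuclideanSpace ℝ (Fin d)) (hρ : 0 ≤ ρ) (hH : Hfun d α (ρ, w) ≠ ⊤)
    (a : ℝ) (b : EuclideanSpace ℝ (Fin d)) :
    ((a, b) ∈ subdiffH d α (ρ, w) →
      Hfun d α (ρ, w) + Lfun d α (a, b) = ((a * ρ + ⟪b, w⟫ : ℝ) : EReal)) ∧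
    (Lfun d α (a, b) ≠ ⊤ →
      Hfun d α (ρ, w) + Lfun d α (a, b) = ((a * ρ + ⟪b, w⟫ : ℝ) : EReal) →
      (a, b) ∈ subdiffH d α (ρ, w) ∧
        w = ((1 : ℝ) / 2 * ρ ^ α) • b ∧
        (0 < ρ → a = -(α / 4) * ρ ^ (α - 1) * ‖b‖ ^ 2)) :=
  fenchel_equality_general d α hα0 hα1 ρ w hH a b
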